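/- arXiv:1707.07053 — 2 statements merged into one kernel-verified Lean document; each statement's English description precedes it below -/
import Mathlib

section
/- Let ω > 0 be locally integrable on the unit circle 𝕊 and suppose there exist constants C₁ > 0, C₂ > 0 such that ω(E)/ω(I) ≤ C₂(|E|/|I|)^{C₁} for all arcs I ⊂ 𝕊 and measurable E ⊂ I. Then there exists β > 0 such that for all arcs I ⊂ 𝕊 and measurable E ⊂ I, ω(E)/ω(I) < β implies |E|/|I| < 1/2. -/
open MeasureTheory Set
open scoped ENNReal

instance : Fact ((0:ℝ) < 2 * Real.pi) := ⟨by positivity⟩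

/-- The unit circle, modeled as `ℝ / 2πℤ` with its arclength (Haar) measure. -/
abbrev Circle2pi := AddCircle (2 * Real.pi)

/-- A (closed-open) arc of the circle: the image of an interval `(a, b]` with
`b - a` at most `2π`. -/
def IsArc (I : Set Circle2pi) : Prop :=
  ∃ a b : ℝ, a < b ∧ b ≤ a + 2 * Real.pi ∧
    I = (fun x : ℝ => (x : Circle2pi)) '' Set.Ioc a b

open Filter Topology

/-!
Lift the weight on an arc `(a, b]` to a measure `ν` on the real line. Applied to the complement
of a set, (1a) shows that a subset carrying at most half of the `ν`-mass of an interval fills at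
most the fraction `t = 1 - (2 C₂)^{-1/C₁} < 1` of its length. To push this fraction below `1/2`,
split intervals repeatedly at their `ν`-median and run a Calderón–Zygmund stopping time: the
maximal nodes in which `E` has `ν`-density above `1/4` carry `ν`-mass at most `4 ν(E)`, cover
almost all of `E` (Lebesgue density theorem, the nodes shrinking geometrically), and, their
parents not being stopped, each meets `E` in at most half its `ν`-mass, hence in at most the
fraction `t` of its length. So `|E| ≤ t |U|` with `ν(U) ≤ 4 ν(E)`, and after `m` rounds
`2 · 4^m ν(E) ≤ ν(I)` forces `|E| ≤ t^{m+1} |I| < |I| / 2`.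
-/

noncomputable def halvingFactor (C₁ C₂ : ℝ) : ℝ≥0∞ := ENNReal.ofReal (1 - (2 * C₂)⁻¹ ^ C₁⁻¹)

theorem halvingFactor_lt_one {C₁ C₂ : ℝ} (hC₂ : 0 < C₂) : halvingFactor C₁ C₂ < 1 := by
  rw [halvingFactor, ENNReal.ofReal_lt_one]
  linarith [Real.rpow_pos_of_pos (by positivity : 0 < (2 * C₂)⁻¹) C₁⁻¹]

theorem measure_le_halvingFactor_mul_of_powerBound {α : Type*} [MeasurableSpace α]
    {μ ν : Measure α} {C₁ C₂ : ℝ} (hC₁ : 0 < C₁) (hC₂ : 0 < C₂) {I A : Set α}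
    (hA : MeasurableSet A) (hAI : A ⊆ I) (hμI : 0 < μ.real I) (hνI : 0 < ν.real I)
    (hpow : ν.real (I \ A) / ν.real I ≤ C₂ * (μ.real (I \ A) / μ.real I) ^ C₁)
    (hhalf : 2 * ν A ≤ ν I) :
    μ A ≤ halvingFactor C₁ C₂ * μ I := by
  have hμfin : μ I ≠ ∞ := fun h => by simp [measureReal_def, h] at hμI
  have hνfin : ν I ≠ ∞ := fun h => by simp [measureReal_def, h] at hνI
  have hhalf' : 2 * ν.real A ≤ ν.real I := by
    simpa [measureReal_def, ENNReal.toReal_mul] using ENNReal.toReal_mono hνfin hhalf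
  set s := μ.real (I \ A) / μ.real I
  have hs : 0 ≤ s := by positivity
  have hδ : (2 * C₂)⁻¹ ^ C₁⁻¹ ≤ s := by
    have : 1 / 2 ≤ C₂ * s ^ C₁ := by
      refine le_trans ?_ hpow
      rw [measureReal_sdiff hAI hA, le_div_iff₀ hνI]
      linarith
    rw [Real.rpow_inv_le_iff_of_pos (by positivity) hs hC₁,
      inv_le_iff_one_le_mul₀ (by positivity)]
    linarith
  rw [le_div_iff₀ hμI, measureReal_sdiff hAI hA] at hδ
  rw [← ofReal_measureReal (measure_ne_top_of_subset hAI hμfin), ← ofReal_measureReal hμfin,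
    halvingFactor, ← ENNReal.ofReal_mul' measureReal_nonneg]
  exact ENNReal.ofReal_le_ofReal (by linarith)

theorem volume_inter_closedBall_div_le {F : Set ℝ} {t : ℝ≥0∞} {u v x : ℝ} (hx : x ∈ Ioc u v)
    (hF : volume (F ∩ Ioc u v) ≤ t * volume (Ioc u v)) :
    volume (F ∩ Metric.closedBall x (v - u)) / volume (Metric.closedBall x (v - u))
      ≤ (t + 1) / 2 := by
  have hsub : Ioc u v ⊆ Metric.closedBall x (v - u) := fun y hy => by
    rw [Metric.mem_closedBall, Real.dist_eq, abs_le]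
    constructor <;> linarith [hx.1, hx.2, hy.1, hy.2]
  have hball : volume (Metric.closedBall x (v - u)) = 2 * volume (Ioc u v) := by
    rw [Real.volume_closedBall, Real.volume_Ioc, ENNReal.ofReal_mul zero_le_two,
      ENNReal.ofReal_ofNat]
  have hrest : volume (Metric.closedBall x (v - u) \ Ioc u v) = volume (Ioc u v) := by
    rw [measure_sdiff hsub measurableSet_Ioc.nullMeasurableSet (by simp), hball, two_mul,
      ENNReal.add_sub_cancel_right (by simp)]
  refine ENNReal.div_le_of_le_mul ?_
  calc volume (F ∩ Metric.closedBall x (v - u))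
      ≤ volume (F ∩ Ioc u v) + volume (Metric.closedBall x (v - u) \ Ioc u v) := by
        refine (measure_mono fun y hy => ?_).trans (measure_union_le _ _)
        by_cases hy' : y ∈ Ioc u v
        exacts [Or.inl ⟨hy.1, hy'⟩, Or.inr ⟨hy.2, hy'⟩]
    _ ≤ (t + 1) * volume (Ioc u v) := by rw [hrest, add_mul, one_mul]; gcongr
    _ = (t + 1) / 2 * volume (Metric.closedBall x (v - u)) := by
        rw [hball, ← mul_assoc, ENNReal.div_mul_cancel two_ne_zero ENNReal.ofNat_ne_top]

theorem volume_eq_zero_of_forall_exists_Ioc {F : Set ℝ} (hF : MeasurableSet F) {t : ℝ≥0∞}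
    (ht : t < 1) (h : ∀ x ∈ F, ∀ ε > 0, ∃ u v, x ∈ Ioc u v ∧ v - u < ε ∧
      volume (F ∩ Ioc u v) ≤ t * volume (Ioc u v)) :
    volume F = 0 := by
  have hc : (t + 1) / 2 < 1 := by
    rw [ENNReal.div_lt_iff (Or.inl two_ne_zero) (Or.inl ENNReal.ofNat_ne_top), one_mul,
      ← one_add_one_eq_two]
    exact ENNReal.add_lt_add_right ENNReal.one_ne_top ht
  have hnot : ∀ᵐ x ∂volume.restrict F, False := by
    filter_upwards [Besicovitch.ae_tendsto_measure_inter_div volume F, ae_restrict_mem hF]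
      with x hlim hxF
    have hfreq : ∃ᶠ r in 𝓝[>] (0 : ℝ),
        volume (F ∩ Metric.closedBall x r) / volume (Metric.closedBall x r) ≤ (t + 1) / 2 := by
      refine (nhdsGT_basis 0).frequently_iff.mpr fun ε hε => ?_
      obtain ⟨u, v, hxuv, hε', hdens⟩ := h x hxF ε hε
      exact ⟨v - u, ⟨by linarith [hxuv.1, hxuv.2], hε'⟩, volume_inter_closedBall_div_le hxuv hdens⟩
    obtain ⟨r, hr, hr'⟩ := ((hlim.eventually (lt_mem_nhds hc)).and_frequently hfreq).exists
    exact not_le.mpr hr hr'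
  rw [← Measure.restrict_eq_zero, ← ae_eq_bot]
  exact eventually_false_iff_eq_bot.mp hnot

section Median

variable {ν : Measure ℝ} [IsLocallyFiniteMeasure ν]

theorem abs_measureReal_Ioc_sub_le (x c c' : ℝ) :
    |ν.real (Ioc x c') - ν.real (Ioc x c)| ≤ ν.real (Icc (c - |c' - c|) (c + |c' - c|)) := by
  have key : ∀ {p q : ℝ}, p ≤ q → Icc p q ⊆ Icc (c - |c' - c|) (c + |c' - c|) →
      |ν.real (Ioc x q) - ν.real (Ioc x p)| ≤ ν.real (Icc (c - |c' - c|) (c + |c' - c|)) := by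
    intro p q hpq hsub
    have hmono : Ioc x p ⊆ Ioc x q := Ioc_subset_Ioc_right hpq
    rw [abs_of_nonneg (sub_nonneg.mpr (measureReal_mono hmono measure_Ioc_lt_top.ne)),
      ← measureReal_sdiff hmono measurableSet_Ioc measure_Ioc_lt_top.ne]
    refine measureReal_mono (fun y hy => hsub ⟨?_, hy.1.2⟩) measure_Icc_lt_top.ne
    exact (not_le.mp fun h => hy.2 ⟨hy.1.1, h⟩).le
  rcases le_total c c' with h | h
  · refine key h (Icc_subset_Icc ?_ ?_) <;> [skip; rw [abs_of_nonneg (sub_nonneg.mpr h)]] <;>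
      linarith [abs_nonneg (c' - c)]
  · rw [abs_sub_comm]
    refine key h (Icc_subset_Icc ?_ ?_) <;> [rw [abs_of_nonpos (sub_nonpos.mpr h)]; skip] <;>
      linarith [abs_nonneg (c' - c)]

variable [NullSingletonClass ν]

theorem continuous_measureReal_Ioc (x : ℝ) : Continuous fun c => ν.real (Ioc x c) := by
  refine continuous_iff_continuousAt.mpr fun c => ?_
  have hδ : Tendsto (fun c' => |c' - c|) (𝓝 c) (𝓝 0) := by
    simpa using (continuous_sub_right c).abs.tendsto c
  have hsmall : Tendsto (fun c' => ν.real (Icc (c - |c' - c|) (c + |c' - c|))) (𝓝 c) (𝓝 0) := by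
    simpa [Function.comp_def, measureReal_def] using
      (ENNReal.tendsto_toReal ENNReal.zero_ne_top).comp ((tendsto_measure_Icc ν c).comp hδ)
  exact tendsto_iff_norm_sub_tendsto_zero.mpr
    (squeeze_zero (fun _ => norm_nonneg _) (fun c' => abs_measureReal_Ioc_sub_le x c c') hsmall)

theorem exists_two_mul_measure_Ioc_eq {x y : ℝ} (hxy : x ≤ y) :
    ∃ c ∈ Icc x y, 2 * ν (Ioc x c) = ν (Ioc x y) := by
  obtain ⟨c, hc, hmid⟩ := intermediate_value_Icc hxy (continuous_measureReal_Ioc x).continuousOn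
    (show ν.real (Ioc x y) / 2 ∈ Icc (ν.real (Ioc x x)) (ν.real (Ioc x y)) by
      simp only [Ioc_self, measureReal_empty]
      constructor <;> linarith [measureReal_nonneg (μ := ν) (s := Ioc x y)])
  refine ⟨c, hc, ?_⟩
  dsimp only at hmid
  rw [← ofReal_measureReal measure_Ioc_lt_top.ne, ← ofReal_measureReal measure_Ioc_lt_top.ne,
    hmid, ← ENNReal.ofReal_ofNat 2, ← ENNReal.ofReal_mul zero_le_two]
  ring_nf

end Median

def HalfMassLengthBound (ν : Measure ℝ) (t : ℝ≥0∞) (R : ℝ × ℝ) : Prop :=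
  ∀ u v, R.1 ≤ u → v ≤ R.2 → ∀ A ⊆ Ioc u v, MeasurableSet A →
    2 * ν A ≤ ν (Ioc u v) → volume A ≤ t * volume (Ioc u v)

theorem halfMassLengthBound_of_powerBound {ν : Measure ℝ} [IsLocallyFiniteMeasure ν]
    {C₁ C₂ : ℝ} (hC₁ : 0 < C₁) (hC₂ : 0 < C₂) {R : ℝ × ℝ}
    (hpos : ∀ u v, R.1 ≤ u → u < v → v ≤ R.2 → ν (Ioc u v) ≠ 0)
    (hpow : ∀ u v, R.1 ≤ u → u < v → v ≤ R.2 → ∀ E ⊆ Ioc u v, MeasurableSet E →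
      ν.real E / ν.real (Ioc u v) ≤ C₂ * (volume.real E / volume.real (Ioc u v)) ^ C₁) :
    HalfMassLengthBound ν (halvingFactor C₁ C₂) R := by
  intro u v hu hv A hA hAm hhalf
  rcases lt_or_ge u v with huv | hvu
  · refine measure_le_halvingFactor_mul_of_powerBound hC₁ hC₂ hAm hA ?_ ?_
      (hpow u v hu huv hv _ sdiff_subset (measurableSet_Ioc.diff hAm)) hhalf
    · rw [Real.volume_real_Ioc_of_le huv.le]
      linarith
    · exact ENNReal.toReal_pos (hpos u v hu huv hv) measure_Ioc_lt_top.ne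
  · rw [Ioc_eq_empty (not_lt.mpr hvu), subset_empty_iff] at hA
    simp [hA]

namespace MedianTree

-- The value `x` is junk, taken only when `y < x`.
open Classical in
noncomputable def median (ν : Measure ℝ) (x y : ℝ) : ℝ :=
  if h : ∃ c ∈ Icc x y, 2 * ν (Ioc x c) = ν (Ioc x y) then h.choose else x

noncomputable def split (ν : Measure ℝ) (p : ℝ × ℝ) : Bool → ℝ × ℝ
  | false => (p.1, median ν p.1 p.2)
  | true => (median ν p.1 p.2, p.2)

-- Addresses list the choices from the leaf up to the root, so ancestors are suffixes.
noncomputable def node (ν : Measure ℝ) (R : ℝ × ℝ) : List Bool → ℝ × ℝ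
  | [] => R
  | b :: l => split ν (node ν R l) b

def cell (p : ℝ × ℝ) : Set ℝ := Ioc p.1 p.2

noncomputable def address (ν : Measure ℝ) (R : ℝ × ℝ) (x : ℝ) : ℕ → List Bool
  | 0 => []
  | n + 1 =>
    decide (median ν (node ν R (address ν R x n)).1 (node ν R (address ν R x n)).2 < x) ::
      address ν R x n

def Stopped (ν : Measure ℝ) (R : ℝ × ℝ) (E : Set ℝ) (l : List Bool) : Prop :=
  ν (cell (node ν R l)) < 4 * ν (E ∩ cell (node ν R l))

def IsMaximalStopped (ν : Measure ℝ) (R : ℝ × ℝ) (E : Set ℝ) (l : List Bool) : Prop :=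
  Stopped ν R E l ∧ ∀ s, s <:+ l → Stopped ν R E s → s = l

def stoppingSet (ν : Measure ℝ) (R : ℝ × ℝ) (E : Set ℝ) : Set ℝ :=
  ⋃ l ∈ {l | IsMaximalStopped ν R E l}, cell (node ν R l)

variable {ν : Measure ℝ} {R p : ℝ × ℝ} {E : Set ℝ} {x : ℝ} {t : ℝ≥0∞}

theorem disjoint_cell_split (ν : Measure ℝ) (p : ℝ × ℝ) :
    Disjoint (cell (split ν p false)) (cell (split ν p true)) :=
  Ioc_disjoint_Ioc_of_le le_rfl

theorem mem_cell_split_decide (hx : x ∈ cell p) :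
    x ∈ cell (split ν p (decide (median ν p.1 p.2 < x))) := by
  by_cases h : median ν p.1 p.2 < x
  · rw [decide_eq_true h]; exact ⟨h, hx.2⟩
  · rw [decide_eq_false h]; exact ⟨hx.1, not_lt.mp h⟩

theorem eq_decide_of_mem_cell_split {b : Bool} (hx : x ∈ cell (split ν p b)) :
    b = decide (median ν p.1 p.2 < x) := by
  cases b
  · simpa [split, cell] using hx.2
  · simpa [split, cell] using hx.1

theorem length_address (n : ℕ) : (address ν R x n).length = n := by
  induction n with
  | zero => rfl
  | succ n ih => simp [address, ih]

theorem address_suffix {m n : ℕ} (h : m ≤ n) : address ν R x m <:+ address ν R x n := by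
  induction n with
  | zero => rw [Nat.le_zero.mp h]
  | succ n ih =>
    rcases h.eq_or_lt with rfl | h
    · exact List.suffix_rfl
    · exact (ih (Nat.lt_succ_iff.mp h)).trans (List.suffix_cons _ _)

theorem eq_address_of_suffix {s : List Bool} {n : ℕ} (h : s <:+ address ν R x n) :
    s = address ν R x s.length := by
  have hlen : s.length ≤ n := by simpa [length_address] using h.length_le
  exact (List.suffix_of_suffix_length_le h (address_suffix hlen)
    (by simp [length_address])).eq_of_length (by simp [length_address])

theorem mem_cell_node_address (hx : x ∈ cell R) (n : ℕ) :
    x ∈ cell (node ν R (address ν R x n)) := by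
  induction n with
  | zero => exact hx
  | succ n ih => exact mem_cell_split_decide ih

theorem measurableSet_stoppingSet : MeasurableSet (stoppingSet ν R E) :=
  .biUnion (to_countable _) fun _ _ => measurableSet_Ioc

theorem mem_stoppingSet_of_stopped (hx : x ∈ cell R) {n : ℕ}
    (h : Stopped ν R E (address ν R x n)) : x ∈ stoppingSet ν R E := by
  classical
  have hex : ∃ n, Stopped ν R E (address ν R x n) := ⟨n, h⟩
  refine mem_biUnion (x := address ν R x (Nat.find hex))
    ⟨Nat.find_spec hex, fun s hs hst => ?_⟩ (mem_cell_node_address hx _)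
  rw [eq_address_of_suffix hs] at hst ⊢
  have hle := hs.length_le
  rw [length_address] at hle
  rw [le_antisymm hle (Nat.find_min' hex hst)]

section Measure

variable [IsLocallyFiniteMeasure ν] [NullSingletonClass ν]

theorem median_mem {x y : ℝ} (h : x ≤ y) : median ν x y ∈ Icc x y := by
  rw [median, dif_pos (exists_two_mul_measure_Ioc_eq h)]
  exact (exists_two_mul_measure_Ioc_eq h).choose_spec.1

theorem two_mul_measure_Ioc_median {x y : ℝ} (h : x ≤ y) :
    2 * ν (Ioc x (median ν x y)) = ν (Ioc x y) := by
  rw [median, dif_pos (exists_two_mul_measure_Ioc_eq h)]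
  exact (exists_two_mul_measure_Ioc_eq h).choose_spec.2

theorem split_bounds (hp : p.1 ≤ p.2) (b : Bool) :
    p.1 ≤ (split ν p b).1 ∧ (split ν p b).1 ≤ (split ν p b).2 ∧ (split ν p b).2 ≤ p.2 := by
  obtain ⟨h₁, h₂⟩ := median_mem (ν := ν) hp
  cases b <;> exact ⟨by simp [split, h₁], by simp [split, h₁, h₂], by simp [split, h₂]⟩

theorem cell_split_subset (hp : p.1 ≤ p.2) (b : Bool) : cell (split ν p b) ⊆ cell p := by
  obtain ⟨h₁, -, h₂⟩ := split_bounds (ν := ν) hp b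
  exact Ioc_subset_Ioc h₁ h₂

theorem two_mul_measure_cell_split (hp : p.1 ≤ p.2) (b : Bool) :
    2 * ν (cell (split ν p b)) = ν (cell p) := by
  have hleft := two_mul_measure_Ioc_median (ν := ν) hp
  cases b
  · exact hleft
  · obtain ⟨h₁, h₂⟩ := median_mem (ν := ν) hp
    have hsum : ν (cell (split ν p false)) + ν (cell (split ν p true)) = ν (cell p) := by
      rw [← measure_union (disjoint_cell_split ν p) measurableSet_Ioc]
      exact congrArg ν (Ioc_union_Ioc_eq_Ioc h₁ h₂)
    have heq : ν (cell (split ν p false)) = ν (cell (split ν p true)) :=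
      (ENNReal.add_right_inj (a := ν (cell (split ν p false))) measure_Ioc_lt_top.ne).mp
        (by rw [← two_mul, hsum]; exact hleft)
    rwa [← heq]

theorem node_bounds (hR : R.1 ≤ R.2) (l : List Bool) :
    R.1 ≤ (node ν R l).1 ∧ (node ν R l).1 ≤ (node ν R l).2 ∧ (node ν R l).2 ≤ R.2 := by
  induction l with
  | nil => exact ⟨le_rfl, hR, le_rfl⟩
  | cons b l ih =>
    obtain ⟨h₁, h₂, h₃⟩ := split_bounds (ν := ν) ih.2.1 b
    exact ⟨ih.1.trans h₁, h₂, h₃.trans ih.2.2⟩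

theorem cell_node_subset (hR : R.1 ≤ R.2) (l : List Bool) : cell (node ν R l) ⊆ cell R :=
  Ioc_subset_Ioc (node_bounds hR l).1 (node_bounds hR l).2.2

theorem eq_address_of_mem_cell_node (hR : R.1 ≤ R.2) {l : List Bool}
    (hx : x ∈ cell (node ν R l)) : l = address ν R x l.length := by
  induction l with
  | nil => rfl
  | cons b l ih =>
    have hl : l = address ν R x l.length := ih (cell_split_subset (node_bounds hR l).2.1 b hx)
    change b :: l = decide (median ν (node ν R _).1 (node ν R _).2 < x) :: _
    rw [← hl, ← eq_decide_of_mem_cell_split hx]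

theorem volume_cell_node_le (hP : HalfMassLengthBound ν t R) (hR : R.1 ≤ R.2)
    (l : List Bool) : volume (cell (node ν R l)) ≤ t ^ l.length * volume (cell R) := by
  induction l with
  | nil => simp [node]
  | cons b l ih =>
    obtain ⟨h₁, h₂, h₃⟩ := node_bounds (ν := ν) hR l
    calc volume (cell (node ν R (b :: l)))
        ≤ t * volume (cell (node ν R l)) :=
          hP _ _ h₁ h₃ _ (cell_split_subset h₂ b) measurableSet_Ioc
            (two_mul_measure_cell_split h₂ b).le
      _ ≤ t * (t ^ l.length * volume (cell R)) := by gcongr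
      _ = t ^ (b :: l).length * volume (cell R) := by rw [List.length_cons, pow_succ']; ring

theorem volume_inter_cell_node_le (hP : HalfMassLengthBound ν t R) (hR : R.1 ≤ R.2)
    (hE : MeasurableSet E) {l : List Bool}
    (h : 2 * ν (E ∩ cell (node ν R l)) ≤ ν (cell (node ν R l))) :
    volume (E ∩ cell (node ν R l)) ≤ t * volume (cell (node ν R l)) :=
  hP _ _ (node_bounds hR l).1 (node_bounds hR l).2.2 _ inter_subset_right
    (hE.inter measurableSet_Ioc) h

theorem stoppingSet_subset (hR : R.1 ≤ R.2) : stoppingSet ν R E ⊆ cell R :=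
  iUnion₂_subset fun l _ => cell_node_subset hR l

theorem IsMaximalStopped.eq (hR : R.1 ≤ R.2) {l₁ l₂ : List Bool}
    (h₁ : IsMaximalStopped ν R E l₁) (h₂ : IsMaximalStopped ν R E l₂)
    (hx₁ : x ∈ cell (node ν R l₁)) (hx₂ : x ∈ cell (node ν R l₂)) : l₁ = l₂ := by
  have e₁ := eq_address_of_mem_cell_node hR hx₁
  have e₂ := eq_address_of_mem_cell_node hR hx₂
  rcases le_total l₁.length l₂.length with h | h
  · exact h₂.2 l₁ (by rw [e₁, e₂]; exact address_suffix h) h₁.1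
  · exact (h₁.2 l₂ (by rw [e₁, e₂]; exact address_suffix h) h₂.1).symm

theorem pairwiseDisjoint_cell_maximal (hR : R.1 ≤ R.2) :
    {l | IsMaximalStopped ν R E l}.PairwiseDisjoint fun l => cell (node ν R l) :=
  fun _ h₁ _ h₂ hne => disjoint_left.mpr fun _ hx₁ hx₂ => hne (h₁.eq hR h₂ hx₁ hx₂)

theorem measure_stoppingSet_le (hR : R.1 ≤ R.2) (hE : MeasurableSet E) :
    ν (stoppingSet ν R E) ≤ 4 * ν E := by
  have hdisj := pairwiseDisjoint_cell_maximal (ν := ν) (E := E) hR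
  calc ν (stoppingSet ν R E)
      = ∑' l : {l | IsMaximalStopped ν R E l}, ν (cell (node ν R l)) :=
        measure_biUnion (to_countable _) hdisj fun _ _ => measurableSet_Ioc
    _ ≤ ∑' l : {l | IsMaximalStopped ν R E l}, 4 * ν (E ∩ cell (node ν R l)) :=
        ENNReal.tsum_le_tsum fun l => l.2.1.le
    _ = 4 * ν (E ∩ stoppingSet ν R E) := by
        rw [ENNReal.tsum_mul_left, stoppingSet, inter_iUnion₂,
          measure_biUnion (to_countable _) (hdisj.mono fun _ => inter_subset_right)
            fun _ _ => hE.inter measurableSet_Ioc]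
    _ ≤ 4 * ν E := by gcongr; exact inter_subset_left

theorem two_mul_measure_inter_le_of_isMaximalStopped (hR : R.1 ≤ R.2)
    (hroot : 4 * ν E ≤ ν (cell R)) {l : List Bool} (hl : IsMaximalStopped ν R E l) :
    2 * ν (E ∩ cell (node ν R l)) ≤ ν (cell (node ν R l)) := by
  obtain ⟨b, q, rfl⟩ : ∃ b q, l = b :: q := List.exists_cons_of_ne_nil fun h => by
    subst h
    exact (hl.1.trans_le (by gcongr; exact inter_subset_left)).not_ge hroot
  have hq : ¬ Stopped ν R E q := fun hq => by
    simpa using congrArg List.length (hl.2 q (List.suffix_cons b q) hq)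
  have hnode := (node_bounds (ν := ν) hR q).2.1
  refine (ENNReal.mul_le_mul_iff_right two_ne_zero ENNReal.ofNat_ne_top).mp ?_
  calc 2 * (2 * ν (E ∩ cell (node ν R (b :: q))))
      = 4 * ν (E ∩ cell (split ν (node ν R q) b)) := by rw [← mul_assoc]; norm_num [node]
    _ ≤ 4 * ν (E ∩ cell (node ν R q)) := by gcongr; exact cell_split_subset hnode b
    _ ≤ ν (cell (node ν R q)) := not_lt.mp hq
    _ = 2 * ν (cell (node ν R (b :: q))) := (two_mul_measure_cell_split hnode b).symm

theorem volume_inter_stoppingSet_le (hP : HalfMassLengthBound ν t R) (hR : R.1 ≤ R.2)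
    (hE : MeasurableSet E) (hroot : 4 * ν E ≤ ν (cell R)) :
    volume (E ∩ stoppingSet ν R E) ≤ t * volume (stoppingSet ν R E) := by
  have hdisj := pairwiseDisjoint_cell_maximal (ν := ν) (E := E) hR
  rw [stoppingSet, inter_iUnion₂,
    measure_biUnion (to_countable _) (hdisj.mono fun _ => inter_subset_right)
      fun _ _ => hE.inter measurableSet_Ioc,
    measure_biUnion (to_countable _) hdisj fun _ _ => measurableSet_Ioc, ← ENNReal.tsum_mul_left]
  exact ENNReal.tsum_le_tsum fun l =>
    volume_inter_cell_node_le hP hR hE (two_mul_measure_inter_le_of_isMaximalStopped hR hroot l.2)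

theorem volume_sdiff_stoppingSet (hP : HalfMassLengthBound ν t R) (ht : t < 1)
    (hR : R.1 ≤ R.2) (hE : MeasurableSet E) (hER : E ⊆ cell R) :
    volume (E \ stoppingSet ν R E) = 0 := by
  have hfin : volume (cell R) ≠ ∞ := measure_Ioc_lt_top.ne
  have hlim : Tendsto (fun n : ℕ => t ^ n * volume (cell R)) atTop (𝓝 0) := by
    simpa using ENNReal.Tendsto.mul_const (ENNReal.tendsto_pow_atTop_nhds_zero_of_lt_one ht)
      (Or.inr hfin)
  refine volume_eq_zero_of_forall_exists_Ioc (hE.diff measurableSet_stoppingSet) ht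
    fun x hx ε hε => ?_
  obtain ⟨n, hn⟩ := (hlim.eventually (gt_mem_nhds (ENNReal.ofReal_pos.mpr hε))).exists
  have hJ : ¬ Stopped ν R E (address ν R x n) := fun h =>
    hx.2 (mem_stoppingSet_of_stopped (hER hx.1) h)
  set J := node ν R (address ν R x n)
  refine ⟨J.1, J.2, mem_cell_node_address (hER hx.1) n, ?_, ?_⟩
  · have hlen := volume_cell_node_le hP hR (address ν R x n)
    rw [length_address] at hlen
    replace hlen := hlen.trans_lt hn
    rw [cell, Real.volume_Ioc] at hlen
    exact (ENNReal.ofReal_lt_ofReal_iff hε).mp hlen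
  · refine (measure_mono (inter_subset_inter_left _ sdiff_subset)).trans
      (volume_inter_cell_node_le hP hR hE ?_)
    exact (mul_le_mul_left (by norm_num) _).trans (not_lt.mp hJ)

theorem volume_le_mul_volume_stoppingSet (hP : HalfMassLengthBound ν t R) (ht : t < 1)
    (hR : R.1 ≤ R.2) (hE : MeasurableSet E) (hER : E ⊆ cell R) (hroot : 4 * ν E ≤ ν (cell R)) :
    volume E ≤ t * volume (stoppingSet ν R E) := by
  rw [← measure_inter_add_sdiff E measurableSet_stoppingSet,
    volume_sdiff_stoppingSet hP ht hR hE hER, add_zero]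
  exact volume_inter_stoppingSet_le hP hR hE hroot

end Measure

end MedianTree

section Iteration

variable {ν : Measure ℝ} [IsLocallyFiniteMeasure ν] [NullSingletonClass ν] {t : ℝ≥0∞}
  {R : ℝ × ℝ}

open MedianTree in
theorem HalfMassLengthBound.volume_le_pow_mul (hP : HalfMassLengthBound ν t R) (ht : t < 1)
    (hR : R.1 ≤ R.2) (m : ℕ) {E : Set ℝ} (hE : MeasurableSet E) (hER : E ⊆ Ioc R.1 R.2)
    (hsmall : 2 * 4 ^ m * ν E ≤ ν (Ioc R.1 R.2)) :
    volume E ≤ t ^ (m + 1) * volume (Ioc R.1 R.2) := by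
  induction m generalizing E with
  | zero => simpa using hP R.1 R.2 le_rfl le_rfl E hER hE (by simpa using hsmall)
  | succ m ih =>
    have hroot : 4 * ν E ≤ ν (cell R) := by
      refine le_trans ?_ hsmall
      gcongr
      calc (4 : ℝ≥0∞) = 1 * 4 ^ 1 := by norm_num
        _ ≤ 2 * 4 ^ (m + 1) := by gcongr <;> norm_num
    have hU := ih measurableSet_stoppingSet (stoppingSet_subset hR) <| calc
      2 * 4 ^ m * ν (stoppingSet ν R E) ≤ 2 * 4 ^ m * (4 * ν E) := by
        gcongr; exact measure_stoppingSet_le hR hE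
      _ = 2 * 4 ^ (m + 1) * ν E := by ring
      _ ≤ ν (Ioc R.1 R.2) := hsmall
    calc volume E ≤ t * volume (stoppingSet ν R E) :=
          volume_le_mul_volume_stoppingSet hP ht hR hE hER hroot
      _ ≤ t * (t ^ (m + 1) * volume (Ioc R.1 R.2)) := by gcongr
      _ = t ^ (m + 1 + 1) * volume (Ioc R.1 R.2) := by ring

theorem HalfMassLengthBound.measureReal_div_lt_half (hP : HalfMassLengthBound ν t R)
    (ht : t < 1) (hR : R.1 < R.2) (hνR : ν (Ioc R.1 R.2) ≠ 0) {m : ℕ}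
    (hm : t ^ (m + 1) < 1 / 2) {E : Set ℝ} (hE : MeasurableSet E) (hER : E ⊆ Ioc R.1 R.2)
    (hsmall : ν.real E / ν.real (Ioc R.1 R.2) < (2 * 4 ^ m)⁻¹) :
    volume.real E / volume.real (Ioc R.1 R.2) < 1 / 2 := by
  have hνR' : 0 < ν.real (Ioc R.1 R.2) := ENNReal.toReal_pos hνR measure_Ioc_lt_top.ne
  have hsmall' : 2 * 4 ^ m * ν E ≤ ν (Ioc R.1 R.2) := by
    rw [div_lt_iff₀ hνR', ← div_eq_inv_mul, lt_div_iff₀ (by positivity)] at hsmall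
    rw [← ofReal_measureReal (measure_ne_top_of_subset hER measure_Ioc_lt_top.ne),
      ← ofReal_measureReal measure_Ioc_lt_top.ne,
      show (2 * 4 ^ m : ℝ≥0∞) = ENNReal.ofReal (2 * 4 ^ m) by
        simp [ENNReal.ofReal_mul, ENNReal.ofReal_pow],
      ← ENNReal.ofReal_mul (by positivity)]
    exact ENNReal.ofReal_le_ofReal (by linarith)
  have hvol : volume E < 1 / 2 * volume (Ioc R.1 R.2) :=
    (hP.volume_le_pow_mul ht hR.le m hE hER hsmall').trans_lt
      (ENNReal.mul_lt_mul_left (by simpa using hR) measure_Ioc_lt_top.ne hm)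
  have hvolR : 0 < volume.real (Ioc R.1 R.2) := by
    rw [Real.volume_real_Ioc_of_le hR.le]; linarith
  rw [div_lt_iff₀ hvolR]
  simpa [measureReal_def, ENNReal.toReal_mul] using
    ENNReal.toReal_strict_mono (by simp [ENNReal.mul_eq_top]) hvol

end Iteration

namespace CircleLift

variable {T : ℝ} [Fact (0 < T)]

noncomputable def rep (a : ℝ) (z : AddCircle T) : ℝ := AddCircle.equivIoc T a z

theorem measurable_rep (a : ℝ) : Measurable (rep (T := T) a) :=
  measurable_subtype_coe.comp (AddCircle.measurableEquivIoc T a).measurable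

theorem coe_rep (a : ℝ) (z : AddCircle T) : ((rep a z : ℝ) : AddCircle T) = z :=
  (AddCircle.equivIoc T a).symm_apply_apply z

theorem preimage_rep_preimage_coe (a : ℝ) (E : Set (AddCircle T)) :
    rep a ⁻¹' (((↑) : ℝ → AddCircle T) ⁻¹' E) = E := by
  ext z
  simp [coe_rep]

theorem preimage_rep_eq_image {a : ℝ} {S : Set ℝ} (hS : S ⊆ Ioc a (a + T)) :
    rep a ⁻¹' S = ((↑) : ℝ → AddCircle T) '' S := by
  ext z
  refine ⟨fun hz => ⟨rep a z, hz, coe_rep a z⟩, ?_⟩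
  rintro ⟨x, hx, rfl⟩
  simpa [mem_preimage, rep, AddCircle.equivIoc_coe_eq (hS hx)] using hx

theorem map_rep_volume (a : ℝ) :
    volume.map (rep (T := T) a) = volume.restrict (Ioc a (a + T)) := by
  rw [show rep a = Subtype.val ∘ AddCircle.measurableEquivIoc T a from rfl,
    ← Measure.map_map measurable_subtype_coe (AddCircle.measurableEquivIoc T a).measurable,
    ← map_comap_subtype_coe measurableSet_Ioc]
  exact congrArg (Measure.map Subtype.val) (AddCircle.measurePreserving_equivIoc T).map_eq

theorem volume_preimage_rep {a : ℝ} {S : Set ℝ} (hS : MeasurableSet S)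
    (hS' : S ⊆ Ioc a (a + T)) : volume (rep (T := T) a ⁻¹' S) = volume S := by
  rw [← Measure.map_apply (measurable_rep a) hS, map_rep_volume, Measure.restrict_apply hS,
    inter_eq_left.mpr hS']

noncomputable def liftedWeight (ω : AddCircle T → ℝ) (a : ℝ) : Measure ℝ :=
  (volume.withDensity fun z => ENNReal.ofReal (ω z)).map (rep a)

variable {ω : AddCircle T → ℝ} {a : ℝ}

theorem liftedWeight_apply {S : Set ℝ} (hS : MeasurableSet S) :
    liftedWeight ω a S = volume.withDensity (fun z => ENNReal.ofReal (ω z)) (rep a ⁻¹' S) :=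
  Measure.map_apply (measurable_rep a) hS

theorem measureReal_liftedWeight (hω : Integrable ω) (hω0 : ∀ z, 0 ≤ ω z) {S : Set ℝ}
    (hS : MeasurableSet S) : (liftedWeight ω a).real S = ∫ z in rep a ⁻¹' S, ω z := by
  rw [measureReal_def, liftedWeight_apply hS, withDensity_apply _ (measurable_rep a hS),
    ← ofReal_integral_eq_lintegral_ofReal hω.integrableOn (.of_forall hω0),
    ENNReal.toReal_ofReal (setIntegral_nonneg (measurable_rep a hS) fun z _ => hω0 z)]

theorem isFiniteMeasure_liftedWeight (hω : Integrable ω) (a : ℝ) :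
    IsFiniteMeasure (liftedWeight ω a) := by
  have := isFiniteMeasure_withDensity_ofReal hω.2
  rw [liftedWeight]
  infer_instance

instance (ω : AddCircle T → ℝ) (a : ℝ) : NullSingletonClass (liftedWeight ω a) :=
  ⟨fun x => (withDensity_absolutelyContinuous _ _).map (measurable_rep a)
    (by rw [map_rep_volume]; exact measure_singleton x)⟩

theorem liftedWeight_Ioc_ne_zero (hω : AEMeasurable ω) (hpos : ∀ z, 0 < ω z) {u v : ℝ}
    (hu : a ≤ u) (huv : u < v) (hv : v ≤ a + T) : liftedWeight ω a (Ioc u v) ≠ 0 := by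
  rw [liftedWeight_apply measurableSet_Ioc, Ne, withDensity_apply_eq_zero' hω.ennreal_ofReal]
  simp only [ne_eq, ENNReal.ofReal_eq_zero, not_le, hpos, ofPred_true, univ_inter]
  rw [volume_preimage_rep measurableSet_Ioc (Ioc_subset_Ioc_left hu |>.trans
    (Ioc_subset_Ioc_right hv)), Real.volume_Ioc]
  simpa using huv

end CircleLift

open CircleLift

theorem halfMassLengthBound_liftedWeight {ω : Circle2pi → ℝ} (hpos : ∀ x, 0 < ω x)
    (hint : Integrable ω) {C₁ C₂ : ℝ} (hC₁ : 0 < C₁) (hC₂ : 0 < C₂)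
    (h1a : ∀ I E : Set Circle2pi, IsArc I → E ⊆ I → MeasurableSet E →
      (∫ x in E, ω x) / (∫ x in I, ω x)
        ≤ C₂ * ((volume E).toReal / (volume I).toReal) ^ C₁)
    {a b : ℝ} (hb : b ≤ a + 2 * Real.pi) :
    HalfMassLengthBound (liftedWeight ω a) (halvingFactor C₁ C₂) (a, b) := by
  have := isFiniteMeasure_liftedWeight hint a
  refine halfMassLengthBound_of_powerBound hC₁ hC₂
    (fun u v hu huv hv => liftedWeight_Ioc_ne_zero hint.aemeasurable hpos hu huv (hv.trans hb))
    fun u v hu huv hv E hE hEm => ?_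
  have hIoc : Ioc u v ⊆ Ioc a (a + 2 * Real.pi) := Ioc_subset_Ioc hu (hv.trans hb)
  have harc : IsArc (rep a ⁻¹' Ioc u v) :=
    ⟨u, v, huv, by linarith [hv.trans hb], preimage_rep_eq_image hIoc⟩
  have := h1a _ _ harc (preimage_mono hE) (measurable_rep a hEm)
  rwa [← measureReal_liftedWeight hint (fun x => (hpos x).le) hEm,
    ← measureReal_liftedWeight hint (fun x => (hpos x).le) measurableSet_Ioc,
    volume_preimage_rep hEm (hE.trans hIoc), volume_preimage_rep measurableSet_Ioc hIoc] at this

/-- Coifman–Fefferman: condition (1a) implies condition (2a) for a positive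
locally integrable weight `ω` on the unit circle. -/
theorem Ainfty_one_a_implies_two_a
    (ω : Circle2pi → ℝ) (hpos : ∀ x, 0 < ω x)
    (hint : Integrable ω volume)
    (C₁ C₂ : ℝ) (hC₁ : 0 < C₁) (hC₂ : 0 < C₂)
    (h1a : ∀ I E : Set Circle2pi, IsArc I → E ⊆ I → MeasurableSet E →
      (∫ x in E, ω x) / (∫ x in I, ω x)
        ≤ C₂ * ((volume E).toReal / (volume I).toReal) ^ C₁) :
    ∃ β > (0:ℝ), ∀ I E : Set Circle2pi, IsArc I → E ⊆ I → MeasurableSet E →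
      (∫ x in E, ω x) / (∫ x in I, ω x) < β →
      (volume E).toReal / (volume I).toReal < 1 / 2 := by
  have ht := halvingFactor_lt_one (C₁ := C₁) hC₂
  obtain ⟨m, hm⟩ : ∃ m : ℕ, halvingFactor C₁ C₂ ^ (m + 1) < 1 / 2 :=
    (((ENNReal.tendsto_pow_atTop_nhds_zero_of_lt_one ht).comp (tendsto_add_atTop_nat 1)).eventually
      (gt_mem_nhds (by norm_num))).exists
  refine ⟨(2 * 4 ^ m)⁻¹, by positivity, ?_⟩
  rintro I E ⟨a, b, hab, hb, rfl⟩ hEI hEm hsmall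
  have := isFiniteMeasure_liftedWeight hint a
  have hIoc : Ioc a b ⊆ Ioc a (a + 2 * Real.pi) := Ioc_subset_Ioc_right hb
  set E' := ((↑) : ℝ → Circle2pi) ⁻¹' E ∩ Ioc a b
  have hE'm : MeasurableSet E' := (AddCircle.measurable_mk' hEm).inter measurableSet_Ioc
  have hE : rep a ⁻¹' E' = E := by
    rw [preimage_inter, preimage_rep_preimage_coe, preimage_rep_eq_image hIoc,
      inter_eq_left.mpr hEI]
  have hω0 : ∀ x, 0 ≤ ω x := fun x => (hpos x).le
  rw [← preimage_rep_eq_image hIoc, ← hE, ← measureReal_liftedWeight hint hω0 hE'm,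
    ← measureReal_liftedWeight hint hω0 measurableSet_Ioc] at hsmall
  rw [← preimage_rep_eq_image hIoc, ← hE, volume_preimage_rep hE'm (inter_subset_right.trans hIoc),
    volume_preimage_rep measurableSet_Ioc hIoc]
  exact (halfMassLengthBound_liftedWeight hpos hint hC₁ hC₂ h1a hb).measureReal_div_lt_half ht hab
    (liftedWeight_Ioc_ne_zero hint.aemeasurable hpos le_rfl hab hb) hm hE'm inter_subset_right
    hsmall
end

section
/- Let φ : Δ → Ω be a conformal map onto a BJ quasidisk (so that φ extends to a quasiconformal homeomorphism of the Riemann sphere, and the pull-back operator φ* is bounded from Carleson measures on Ω to Carleson measures on Δ). Then the pull-back operator φ*, defined by φ*dμ = |φ′|^{-1} d(μ∘φ), maps vanishing Carleson measures on Ω to vanishing Carleson measures on Δ, and is bounded between these spaces. -/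
open MeasureTheory Metric Set
open scoped ENNReal

noncomputable def carlesonNorm (Ω : Set ℂ) (μ : Measure ℂ) : ℝ≥0∞ :=
  ⨆ (z : ℂ) (_ : z ∈ frontier Ω) (r : ℝ)
    (_ : 0 < r ∧ r < Metric.diam (frontier Ω)),
      μ (Ω ∩ Metric.ball z r) / ENNReal.ofReal r

def IsVanishingCarleson (Ω : Set ℂ) (μ : Measure ℂ) : Prop :=
  ∀ ε : ℝ, 0 < ε → ∃ r₀ > (0:ℝ), ∀ z ∈ frontier Ω, ∀ r : ℝ, 0 < r → r ≤ r₀ →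
    μ (Ω ∩ Metric.ball z r) ≤ ENNReal.ofReal (ε * r)

/-- The pull-back `φ*μ = |φ′|⁻¹ d(μ∘φ)` of a measure `μ` on `Ω = φ(Δ)` under a
conformal map `φ : Δ → Ω` with inverse `ψ`. -/
noncomputable def pullback (φ ψ : ℂ → ℂ) (Ω : Set ℂ) (μ : Measure ℂ) : Measure ℂ :=
  ((μ.restrict Ω).map ψ).withDensity
    (fun z => (ENNReal.ofReal ‖deriv φ z‖)⁻¹)


/-! Vanishing is local. For `z` on the unit circle and small `r`, Hölder continuity of `φ`
puts every `w ∈ Ω` with `ψ w ∈ Δ ∩ D(z, r)` into the disk `D̄(φ z, t)`, `t = C₂ r^α`, about the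
boundary point `φ z`; so on `Δ ∩ D(z, r)` the pull-back of `μ` agrees with the pull-back of the
restriction of `μ` to that disk. This restriction has small Carleson norm: balls of radius at
most `t` see only `μ`, which is vanishing, and larger balls see at most `μ(Ω ∩ D(φ z, 2t))`.
Boundedness of the pull-back operator then makes `φ*μ(Δ ∩ D(z, r)) / r` small. -/

open Filter Topology

lemma continuousOn_of_dist_le_mul_rpow {X Y : Type*} [PseudoMetricSpace X] [PseudoMetricSpace Y]
    {f : X → Y} {s : Set X} {C α : ℝ} (hα : 0 < α)
    (hf : ∀ x ∈ s, ∀ y ∈ s, dist (f x) (f y) ≤ C * dist x y ^ α) : ContinuousOn f s := by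
  intro x hx
  rw [ContinuousWithinAt, tendsto_iff_dist_tendsto_zero]
  have hbound : Tendsto (fun y => C * dist y x ^ α) (𝓝[s] x) (𝓝 0) := by
    have hcont : Continuous fun y => C * dist y x ^ α :=
      continuous_const.mul ((continuous_id.dist continuous_const).rpow_const
        fun _ => Or.inr hα.le)
    simpa [Real.zero_rpow hα.ne'] using (hcont.tendsto x).mono_left nhdsWithin_le_nhds
  exact squeeze_zero' (Eventually.of_forall fun _ => dist_nonneg)
    (eventually_nhdsWithin_of_forall fun y hy => hf y hy x hx) hbound

lemma exists_pos_forall_mul_rpow_le {C α ρ : ℝ} (hC : 0 < C) (hα : 0 < α) (hρ : 0 < ρ) :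
    ∃ r₀ > 0, ∀ r, 0 ≤ r → r ≤ r₀ → C * r ^ α ≤ ρ := by
  refine ⟨(ρ / C) ^ α⁻¹, by positivity, fun r hr hrr₀ => ?_⟩
  calc C * r ^ α ≤ C * ((ρ / C) ^ α⁻¹) ^ α := by gcongr
    _ = ρ := by rw [Real.rpow_inv_rpow (by positivity) hα.ne']; field_simp

lemma ENNReal.exists_pos_mul_ofReal_le {K : ℝ≥0∞} (hK : K ≠ ⊤) {ε : ℝ} (hε : 0 < ε) :
    ∃ δ > 0, K * ENNReal.ofReal δ ≤ ENNReal.ofReal ε := by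
  have hK₀ : 0 ≤ K.toReal := ENNReal.toReal_nonneg
  refine ⟨ε / (K.toReal + 1), by positivity, ?_⟩
  calc K * ENNReal.ofReal (ε / (K.toReal + 1))
      = ENNReal.ofReal (K.toReal * (ε / (K.toReal + 1))) := by
        rw [ENNReal.ofReal_mul hK₀, ENNReal.ofReal_toReal hK]
    _ ≤ ENNReal.ofReal ε := by
        refine ENNReal.ofReal_le_ofReal ?_
        rw [mul_div_assoc', div_le_iff₀ (by positivity)]
        nlinarith

lemma mem_frontier_image_of_mem_sphere {E F : Type*} [NormedAddCommGroup E] [NormedSpace ℝ E]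
    [TopologicalSpace F] {φ : E → F} {ψ : F → E} {Ω : Set F} {c : E} {R : ℝ} (hR : R ≠ 0)
    (hΩ : φ '' ball c R = Ω) (hφ : ContinuousOn φ (closedBall c R))
    (hψφ : ∀ z ∈ sphere c R, ψ (φ z) = z) (hψ : ∀ w ∈ Ω, ψ w ∈ ball c R)
    {z : E} (hz : z ∈ sphere c R) : φ z ∈ frontier Ω := by
  refine ⟨?_, fun hint => ?_⟩
  · rw [← hΩ]
    exact ((hφ z (sphere_subset_closedBall hz)).mono ball_subset_closedBall).mem_closure_image 
      (by rw [closure_ball c hR]; exact sphere_subset_closedBall hz)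
  · have hzball := hψ _ (interior_subset hint)
    rw [hψφ z hz, mem_ball, mem_sphere.1 hz] at hzball
    exact lt_irrefl R hzball

section CarlesonNorm

variable {Ω : Set ℂ} {μ : Measure ℂ}

lemma measure_inter_ball_le_carlesonNorm_mul {z : ℂ} (hz : z ∈ frontier Ω) {r : ℝ} (hr : 0 < r)
    (hrd : r < diam (frontier Ω)) : μ (Ω ∩ ball z r) ≤ carlesonNorm Ω μ * ENNReal.ofReal r := by
  rw [← ENNReal.div_le_iff (by simpa using hr) ENNReal.ofReal_ne_top]
  exact le_iSup₂_of_le z hz (le_iSup₂_of_le r ⟨hr, hrd⟩ le_rfl)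

lemma carlesonNorm_le {C : ℝ≥0∞}
    (h : ∀ z ∈ frontier Ω, ∀ r : ℝ, 0 < r → μ (Ω ∩ ball z r) ≤ C * ENNReal.ofReal r) :
    carlesonNorm Ω μ ≤ C :=
  iSup₂_le fun z hz => iSup₂_le fun r hr => ENNReal.div_le_of_le_mul (h z hz r hr.1)

lemma carlesonNorm_restrict_closedBall_le {ε ρ t : ℝ} (hε : 0 ≤ ε)
    (hvan : ∀ z ∈ frontier Ω, ∀ r : ℝ, 0 < r → r ≤ ρ → μ (Ω ∩ ball z r) ≤ ENNReal.ofReal (ε * r))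
    {c : ℂ} (hc : c ∈ frontier Ω) (ht : 0 < t) (htρ : 2 * t ≤ ρ) :
    carlesonNorm Ω (μ.restrict (closedBall c t)) ≤ ENNReal.ofReal (2 * ε) := by
  refine carlesonNorm_le fun z hz r hr => ?_
  rw [Measure.restrict_apply' measurableSet_closedBall, ← ENNReal.ofReal_mul (by positivity)]
  rcases le_or_gt r t with hrt | htr
  · calc μ (Ω ∩ ball z r ∩ closedBall c t) ≤ μ (Ω ∩ ball z r) := measure_mono inter_subset_left
      _ ≤ ENNReal.ofReal (ε * r) := hvan z hz r hr (by linarith)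
      _ ≤ ENNReal.ofReal (2 * ε * r) := ENNReal.ofReal_le_ofReal (by nlinarith)
  · calc μ (Ω ∩ ball z r ∩ closedBall c t) ≤ μ (Ω ∩ ball c (2 * t)) :=
          measure_mono fun x ⟨⟨hxΩ, _⟩, hx⟩ =>
            ⟨hxΩ, (mem_closedBall.1 hx).trans_lt (by linarith)⟩
      _ ≤ ENNReal.ofReal (ε * (2 * t)) := hvan c hc _ (by positivity) htρ
      _ ≤ ENNReal.ofReal (2 * ε * r) := ENNReal.ofReal_le_ofReal (by nlinarith)

end CarlesonNorm

lemma pullback_apply_le_pullback_restrict {φ ψ : ℂ → ℂ} {Ω S A : Set ℂ} (μ : Measure ℂ)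
    (hΩ : MeasurableSet Ω) (hS : MeasurableSet S) (hA : MeasurableSet A)
    (hψS : ∀ w ∈ Ω, ψ w ∈ A → w ∈ S) :
    pullback φ ψ Ω μ A ≤ pullback φ ψ Ω (μ.restrict S) A := by
  by_cases hψ : AEMeasurable ψ (μ.restrict Ω)
  · have hψ' : AEMeasurable ψ ((μ.restrict S).restrict Ω) := by
      refine hψ.mono_measure ?_
      rw [Measure.restrict_restrict' hS]
      exact Measure.restrict_mono inter_subset_left le_rfl
    have hpre : ψ ⁻¹' A ∩ Ω = ψ ⁻¹' A ∩ Ω ∩ S :=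
      (inter_eq_left.2 fun w (hw : w ∈ ψ ⁻¹' A ∩ Ω) => hψS w hw.2 hw.1).symm
    refine le_of_eq ?_
    rw [pullback, pullback, withDensity_apply _ hA, withDensity_apply _ hA,
      Measure.restrict_map_of_aemeasurable hψ hA, Measure.restrict_map_of_aemeasurable hψ' hA,
      Measure.restrict_restrict' hΩ, Measure.restrict_restrict' hΩ,
      Measure.restrict_restrict' hS, ← hpre]
  · simp [pullback, Measure.map_of_not_aemeasurable hψ]

lemma pullback_apply_inter_ball_le {φ ψ : ℂ → ℂ} {Ω S : Set ℂ} {μ : Measure ℂ}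
    (hΩ : MeasurableSet Ω) (hS : MeasurableSet S) {z : ℂ} (hz : z ∈ frontier (ball (0:ℂ) 1))
    {r : ℝ} (hr : 0 < r) (hr₂ : r < 2) (hψS : ∀ w ∈ Ω, ψ w ∈ ball 0 1 ∩ ball z r → w ∈ S)
    {C : ℝ≥0∞} (hC : carlesonNorm (ball 0 1) (pullback φ ψ Ω (μ.restrict S)) ≤ C) :
    pullback φ ψ Ω μ (ball 0 1 ∩ ball z r) ≤ C * ENNReal.ofReal r := by
  have hrd : r < diam (frontier (ball (0:ℂ) 1)) := by
    rwa [frontier_ball 0 one_ne_zero, diam_sphere_eq 0 zero_le_one, mul_one]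
  calc pullback φ ψ Ω μ (ball 0 1 ∩ ball z r)
      ≤ pullback φ ψ Ω (μ.restrict S) (ball 0 1 ∩ ball z r) :=
        pullback_apply_le_pullback_restrict μ hΩ hS
          (measurableSet_ball.inter measurableSet_ball) hψS
    _ ≤ carlesonNorm (ball 0 1) (pullback φ ψ Ω (μ.restrict S)) * ENNReal.ofReal r :=
        measure_inter_ball_le_carlesonNorm_mul hz hr hrd
    _ ≤ C * ENNReal.ofReal r := mul_le_mul_left hC _

theorem pullback_vanishing_carleson_general
    (φ ψ : ℂ → ℂ) (Ω : Set ℂ) (hΩ : φ '' ball (0:ℂ) 1 = Ω) (hΩopen : IsOpen Ω)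
    (hψ : ∀ z ∈ closedBall (0:ℂ) 1, ψ (φ z) = z)
    (hφψ : ∀ w ∈ Ω, φ (ψ w) = w ∧ ψ w ∈ ball (0:ℂ) 1)
    -- bi-Hölder continuity on the closed disk (quasiconformal extension)
    (C₂ α : ℝ) (hC₂ : 0 < C₂) (hα₀ : 0 < α)
    (hup : ∀ z₁ ∈ closedBall (0:ℂ) 1, ∀ z₂ ∈ closedBall (0:ℂ) 1,
      dist (φ z₁) (φ z₂) ≤ C₂ * dist z₁ z₂ ^ α)
    -- boundedness of the pull-back operator on Carleson measures (Bishop–Jones)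
    (K : ℝ≥0∞) (hK : K ≠ ⊤)
    (hbdd : ∀ μ : Measure ℂ, carlesonNorm Ω μ < ⊤ →
      carlesonNorm (ball (0:ℂ) 1) (pullback φ ψ Ω μ) ≤ K * carlesonNorm Ω μ) :
    ∀ μ : Measure ℂ, carlesonNorm Ω μ < ⊤ → IsVanishingCarleson Ω μ →
      IsVanishingCarleson (ball (0:ℂ) 1) (pullback φ ψ Ω μ) ∧
      carlesonNorm (ball (0:ℂ) 1) (pullback φ ψ Ω μ) ≤ K * carlesonNorm Ω μ := by
  intro μ hμfin hμvan
  refine ⟨fun ε hε => ?_, hbdd μ hμfin⟩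
  obtain ⟨δ, hδ, hKδ⟩ := ENNReal.exists_pos_mul_ofReal_le hK hε
  obtain ⟨ρ, hρ, hvan⟩ := hμvan (δ / 2) (by positivity)
  obtain ⟨r₀, hr₀, hr₀ρ⟩ := exists_pos_forall_mul_rpow_le hC₂ hα₀ (half_pos hρ)
  refine ⟨min r₀ 1, lt_min hr₀ one_pos, fun z hz r hr hrr₀ => ?_⟩
  have hzs : z ∈ sphere (0:ℂ) 1 := by rwa [frontier_ball 0 one_ne_zero] at hz
  have hφz : φ z ∈ frontier Ω :=
    mem_frontier_image_of_mem_sphere one_ne_zero hΩ (continuousOn_of_dist_le_mul_rpow hα₀ hup)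
      (fun z hz => hψ z (sphere_subset_closedBall hz)) (fun w hw => (hφψ w hw).2) hzs
  set t := C₂ * r ^ α
  have hlocal : ∀ w ∈ Ω, ψ w ∈ ball 0 1 ∩ ball z r → w ∈ closedBall (φ z) t := by
    rintro w hw ⟨-, hwz⟩
    rw [mem_closedBall, ← (hφψ w hw).1]
    exact (hup _ (ball_subset_closedBall (hφψ w hw).2) z (sphere_subset_closedBall hzs)).trans
      (mul_le_mul_of_nonneg_left (Real.rpow_le_rpow dist_nonneg (mem_ball.1 hwz).le hα₀.le) hC₂.le)
  have hsmall : carlesonNorm Ω (μ.restrict (closedBall (φ z) t)) ≤ ENNReal.ofReal δ := by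
    have h2t : 2 * t ≤ ρ := by linarith [hr₀ρ r hr.le (hrr₀.trans (min_le_left _ _))]
    simpa [mul_div_cancel₀ δ two_ne_zero] using
      carlesonNorm_restrict_closedBall_le (by positivity) hvan hφz (by positivity) h2t
  calc pullback φ ψ Ω μ (ball 0 1 ∩ ball z r)
      ≤ K * ENNReal.ofReal δ * ENNReal.ofReal r :=
        pullback_apply_inter_ball_le hΩopen.measurableSet measurableSet_closedBall hz hr
          (by linarith [min_le_right r₀ 1]) hlocal
          ((hbdd _ (hsmall.trans_lt ENNReal.ofReal_lt_top)).trans (mul_le_mul_right hsmall K))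
    _ ≤ ENNReal.ofReal ε * ENNReal.ofReal r := mul_le_mul_left hKδ _
    _ = ENNReal.ofReal (ε * r) := (ENNReal.ofReal_mul hε.le).symm

/-- Let `φ : Δ → Ω` be conformal onto a BJ quasidisk: `φ` extends to a
quasiconformal homeomorphism of the sphere (hence is bi-Hölder on the closed
disk) and the pull-back operator is bounded from `CM(Ω)` to `CM(Δ)`. Then the
pull-back operator maps vanishing Carleson measures on `Ω` to vanishing
Carleson measures on `Δ`, boundedly. -/
theorem pullback_vanishing_carleson
    (φ ψ : ℂ → ℂ) (Ω : Set ℂ) (hΩ : φ '' ball (0:ℂ) 1 = Ω) (hΩopen : IsOpen Ω)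
    (hφ : DifferentiableOn ℂ φ (ball (0:ℂ) 1))
    (hinj : InjOn φ (closedBall (0:ℂ) 1))
    (hψ : ∀ z ∈ closedBall (0:ℂ) 1, ψ (φ z) = z)
    (hφψ : ∀ w ∈ Ω, φ (ψ w) = w ∧ ψ w ∈ ball (0:ℂ) 1)
    -- bi-Hölder continuity on the closed disk (quasiconformal extension)
    (C₁ C₂ α : ℝ) (hC₁ : 0 < C₁) (hC₂ : 0 < C₂) (hα₀ : 0 < α) (hα₁ : α ≤ 1)
    (hlow : ∀ z₁ ∈ closedBall (0:ℂ) 1, ∀ z₂ ∈ closedBall (0:ℂ) 1,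
      C₁ * dist z₁ z₂ ^ (1 / α) ≤ dist (φ z₁) (φ z₂))
    (hup : ∀ z₁ ∈ closedBall (0:ℂ) 1, ∀ z₂ ∈ closedBall (0:ℂ) 1,
      dist (φ z₁) (φ z₂) ≤ C₂ * dist z₁ z₂ ^ α)
    -- boundedness of the pull-back operator on Carleson measures (Bishop–Jones)
    (K : ℝ≥0∞) (hK : K ≠ ⊤)
    (hbdd : ∀ μ : Measure ℂ, carlesonNorm Ω μ < ⊤ →
      carlesonNorm (ball (0:ℂ) 1) (pullback φ ψ Ω μ) ≤ K * carlesonNorm Ω μ) :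
    ∀ μ : Measure ℂ, carlesonNorm Ω μ < ⊤ → IsVanishingCarleson Ω μ →
      IsVanishingCarleson (ball (0:ℂ) 1) (pullback φ ψ Ω μ) ∧
      carlesonNorm (ball (0:ℂ) 1) (pullback φ ψ Ω μ) ≤ K * carlesonNorm Ω μ :=
  pullback_vanishing_carleson_general φ ψ Ω hΩ hΩopen hψ hφψ C₂ α hC₂ hα₀ hup K hK hbdd
end
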